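/- The Poincaré series of the ring of quasi-invariants for A₂(m) equals (1 + t⁴ + t⁵ + t^{2m+2} + t^{2m+3} + t^{2m+7}) / ((1-t²)(1-t³)). -/

import Mathlib

open MvPolynomial

/-- Evaluation at the point `(x, y) ∈ ℂ²`, as a linear map on polynomials. -/
noncomputable def evalAt (x y : ℂ) : MvPolynomial (Fin 2) ℂ →ₗ[ℂ] ℂ :=
  (MvPolynomial.aeval ![x, y]).toLinearMap

/-- The directional derivative `a·∂_x + b·∂_y` on polynomials in two variables. -/
noncomputable def dirD (a b : ℂ) : Module.End ℂ (MvPolynomial (Fin 2) ℂ) :=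
  a • (MvPolynomial.pderiv 0).toLinearMap + b • (MvPolynomial.pderiv 1).toLinearMap

/-- The submodule of quasi-invariants of the configuration `A₂(m)` realized in `ℂ²`: the vector
`e₁` (line `x = 0`) carries multiplicity `m`, and the vectors `e₁ ± η·e₂` (lines `x ± ηy = 0`)
multiplicity `1`, where `η² = 2m+1`. A polynomial `q` is quasi-invariant if the odd normal
derivatives `∂_α^{2r-1} q`, `r = 1,...,m_α`, vanish on each line. -/
noncomputable def quasiA (m : ℕ) (η : ℂ) : Submodule ℂ (MvPolynomial (Fin 2) ℂ) :=
  (⨅ r ∈ Finset.Icc 1 m, ⨅ y : ℂ,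
    LinearMap.ker ((evalAt 0 y).comp ((dirD 1 0 ^ (2 * r - 1) : Module.End ℂ _) :
      MvPolynomial (Fin 2) ℂ →ₗ[ℂ] MvPolynomial (Fin 2) ℂ))) ⊓
  (⨅ t : ℂ, LinearMap.ker ((evalAt (-(η * t)) t).comp (dirD 1 η))) ⊓
  (⨅ t : ℂ, LinearMap.ker ((evalAt (η * t) t).comp (dirD 1 (-η))))

/-! A homogeneous `q = ∑ c_k x^k y^(n-k)` of degree `n` is quasi-invariant iff `c_k = 0` for odd
`k < 2m` (the line `x = 0`) and, since `(∂_x ∓ η ∂_y) q` restricted to the line `x = ±η y` is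
`y^(n-1)` times `∑ (±1)^(k+1) w_k c_k` with `w_k = k η^(k-1) - (n-k) η^(k+1)`, the two other lines
give `∑_{k even} w_k c_k = 0` and `∑_{k odd} w_k c_k = 0`. These conditions are independent, with
pivot monomials `x^k y^(n-k)` for odd `k < 2m`, for `k = 0` (as `w_0 = -nη ≠ 0` when `n > 0`) and
for `k = 2m+1` (as `w_{2m+1} = η^(2m) (2m+1) (2m+2-n)` vanishes only in degree `2m+2`). Counting
pivots gives the dimension of every graded piece, and the series identity becomes a coefficientwise
check of a piecewise linear recurrence. -/

open Finset Module

theorem Submodule.finrank_inf_ker_add_card {K V ι : Type*} [Field K] [AddCommGroup V]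
    [Module K V] [Fintype ι] (W : Submodule K V) [FiniteDimensional K W] (L : V →ₗ[K] ι → K)
    (v : ι → V) (hvW : ∀ i, v i ∈ W) (hdiag : ∀ i, L (v i) i ≠ 0)
    (hoff : ∀ i j, i ≠ j → L (v i) j = 0) :
    finrank K ↥(W ⊓ LinearMap.ker L) + Fintype.card ι = finrank K W := by
  set f := L ∘ₗ W.subtype
  have hsurj : LinearMap.range f = ⊤ := by
    refine LinearMap.range_eq_top.2 fun y => ⟨∑ i, (y i / L (v i) i) • ⟨v i, hvW i⟩, ?_⟩
    ext j
    simp only [f, map_sum, map_smul, LinearMap.comp_apply, Submodule.subtype_apply,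
      Finset.sum_apply, Pi.smul_apply, smul_eq_mul]
    rw [Finset.sum_eq_single j (fun i _ hij => by rw [hoff i j hij, mul_zero]) (by simp),
      div_mul_cancel₀ _ (hdiag j)]
  have hker : finrank K ↥(W ⊓ LinearMap.ker L) = finrank K (LinearMap.ker f) := by
    rw [LinearMap.ker_comp, ← Submodule.map_comap_subtype, Submodule.finrank_map_subtype_eq]
  have := f.finrank_range_add_finrank_ker
  rw [hsurj, finrank_top, Module.finrank_fintype_fun_eq_card] at this
  omega

theorem sum_eq_zero_and_sum_neg_one_pow_mul_eq_zero_iff {K : Type*} [Field K] [NeZero (2 : K)]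
    (s : Finset ℕ) (f : ℕ → K) :
    (∑ k ∈ s, (-1) ^ (k + 1) * f k = 0 ∧ ∑ k ∈ s, f k = 0) ↔
      (∑ k ∈ s with Even k, f k = 0 ∧ ∑ k ∈ s with Odd k, f k = 0) := by
  have hsum : ∑ k ∈ s, f k = ∑ k ∈ s with Even k, f k + ∑ k ∈ s with Odd k, f k := by
    rw [← sum_filter_add_sum_filter_not s Even]
    simp only [Nat.not_even_iff_odd]
  have halt : ∑ k ∈ s, (-1) ^ (k + 1) * f k =
      -∑ k ∈ s with Even k, f k + ∑ k ∈ s with Odd k, f k := by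
    rw [← sum_filter_add_sum_filter_not s Even, ← sum_neg_distrib]
    simp only [Nat.not_even_iff_odd]
    congr 1
    · refine sum_congr rfl fun k hk => ?_
      rw [pow_succ, (mem_filter.1 hk).2.neg_one_pow]; ring
    · refine sum_congr rfl fun k hk => ?_
      rw [pow_succ, (mem_filter.1 hk).2.neg_one_pow]; ring
  rw [hsum, halt]
  constructor
  · rintro ⟨h₁, h₂⟩
    have hE : (2 : K) * ∑ k ∈ s with Even k, f k = 0 := by linear_combination h₂ - h₁
    have hO : (2 : K) * ∑ k ∈ s with Odd k, f k = 0 := by linear_combination h₂ + h₁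
    exact ⟨(mul_eq_zero.1 hE).resolve_left two_ne_zero, (mul_eq_zero.1 hO).resolve_left two_ne_zero⟩
  · rintro ⟨h₁, h₂⟩
    exact ⟨by rw [h₁, h₂]; ring, by rw [h₁, h₂]; ring⟩

lemma Finsupp.degree_fin_two (d : Fin 2 →₀ ℕ) : d.degree = d 0 + d 1 := by
  simp [Finsupp.degree_eq_sum, Fin.sum_univ_two]

noncomputable def expXY (k l : ℕ) : Fin 2 →₀ ℕ := Finsupp.single 0 k + Finsupp.single 1 l

@[simp] lemma expXY_apply_zero (k l : ℕ) : expXY k l 0 = k := by simp [expXY]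

@[simp] lemma expXY_apply_one (k l : ℕ) : expXY k l 1 = l := by simp [expXY]

lemma expXY_eq_iff {k l : ℕ} {d : Fin 2 →₀ ℕ} : expXY k l = d ↔ d 0 = k ∧ d 1 = l := by
  constructor
  · rintro rfl; simp
  · rintro ⟨h0, h1⟩
    ext i; fin_cases i <;> simp [h0, h1]

lemma degree_expXY (k l : ℕ) : (expXY k l).degree = k + l := by
  simp [expXY]

section CommSemiring

variable {R : Type*} [CommSemiring R]

lemma pderiv_zero_monomial_expXY (k l : ℕ) (a : R) :
    pderiv 0 (monomial (expXY k l) a) = monomial (expXY (k - 1) l) (a * k) := by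
  rw [pderiv_monomial, expXY_apply_zero]
  congr 2
  ext i; fin_cases i <;> simp [expXY]

lemma pderiv_one_monomial_expXY (k l : ℕ) (a : R) :
    pderiv 1 (monomial (expXY k l) a) = monomial (expXY k (l - 1)) (a * l) := by
  rw [pderiv_monomial, expXY_apply_one]
  congr 2
  ext i; fin_cases i <;> simp [expXY]

noncomputable def coeffXY (n k : ℕ) : MvPolynomial (Fin 2) R →ₗ[R] R := lcoeff R (expXY k (n - k))

lemma coeffXY_monomial (n k k' : ℕ) (a : R) :
    coeffXY n k (monomial (expXY k' (n - k')) a) = if k' = k then a else 0 := by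
  simp only [coeffXY, lcoeff_apply, coeff_monomial, expXY_eq_iff, expXY_apply_zero,
    expXY_apply_one]
  exact if_congr (by omega) rfl rfl

lemma MvPolynomial.IsHomogeneous.eq_sum_monomial_coeffXY {n : ℕ} {q : MvPolynomial (Fin 2) R}
    (hq : q.IsHomogeneous n) :
    q = ∑ k ∈ range (n + 1), monomial (expXY k (n - k)) (coeffXY n k q) := by
  ext d
  simp only [coeffXY, lcoeff_apply, coeff_sum, coeff_monomial, expXY_eq_iff]
  by_cases hd : d.degree = n
  · rw [Finsupp.degree_fin_two] at hd
    rw [sum_eq_single (d 0) (fun k _ hk => if_neg (by omega)) (by simp; omega),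
      if_pos (by omega)]
    congr 1; symm; rw [expXY_eq_iff]; omega
  · refine (hq.coeff_eq_zero hd).trans (sum_eq_zero fun k hk => if_neg ?_).symm
    rw [Finsupp.degree_fin_two] at hd
    rw [mem_range] at hk
    omega

lemma monomial_expXY_mem_homogeneousSubmodule {n k : ℕ} (hk : k ≤ n) (a : R) :
    monomial (expXY k (n - k)) a ∈ homogeneousSubmodule (Fin 2) R n :=
  isHomogeneous_monomial _ (by rw [degree_expXY]; omega)

end CommSemiring

instance {K : Type*} [Field K] (n : ℕ) :
    FiniteDimensional K (homogeneousSubmodule (Fin 2) K n) :=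
  Module.Finite.iff_fg.2 (homogeneousSubmodule_fg _ _ n)

theorem finrank_homogeneousSubmodule_fin_two (K : Type*) [Field K] (n : ℕ) :
    finrank K (homogeneousSubmodule (Fin 2) K n) = n + 1 := by
  have h := (homogeneousSubmodule (Fin 2) K n).finrank_inf_ker_add_card
    (LinearMap.pi fun k : range (n + 1) => coeffXY n k)
    (fun k => monomial (expXY k (n - k)) 1)
    (fun k => monomial_expXY_mem_homogeneousSubmodule (Nat.lt_succ_iff.1 (mem_range.1 k.2)) 1)
    (fun k => by simp [coeffXY_monomial])
    (fun k k' hkk' => by simp [coeffXY_monomial, hkk'])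
  have hbot : homogeneousSubmodule (Fin 2) K n ⊓ LinearMap.ker
      (LinearMap.pi fun k : range (n + 1) => coeffXY n k) = ⊥ := by
    refine eq_bot_iff.2 fun q hq => ?_
    obtain ⟨hhom, hker⟩ := Submodule.mem_inf.1 hq
    rw [Submodule.mem_bot, (mem_homogeneousSubmodule n q).1 hhom |>.eq_sum_monomial_coeffXY]
    refine sum_eq_zero fun k hk => ?_
    rw [show coeffXY n k q = 0 from congrFun hker ⟨k, hk⟩, map_zero]
  rw [← h, hbot, finrank_bot, Fintype.card_coe, card_range, zero_add]

lemma evalAt_monomial_expXY (x y : ℂ) (k l : ℕ) (a : ℂ) :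
    evalAt x y (monomial (expXY k l) a) = a * x ^ k * y ^ l := by
  simp [evalAt, aeval_monomial, expXY, mul_assoc]

lemma dirD_one_zero_pow_monomial_expXY (j k l : ℕ) (a : ℂ) :
    (dirD 1 0 ^ j) (monomial (expXY k l) a) =
      monomial (expXY (k - j) l) (a * k.descFactorial j) := by
  induction j with
  | zero => simp
  | succ j ih =>
    rw [pow_succ', Module.End.mul_apply, ih]
    simp only [dirD, one_smul, zero_smul, add_zero]
    rw [Derivation.coeFn_coe, pderiv_zero_monomial_expXY, Nat.descFactorial_succ, Nat.sub_sub,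
      Nat.cast_mul, mul_comm ((k - j : ℕ) : ℂ), mul_assoc]

lemma natCast_mul_mul_pow_mul_pow {c i j N : ℕ} (h : c ≠ 0 → i + j = N) (x t : ℂ) :
    (c : ℂ) * ((x * t) ^ i * t ^ j) = c * x ^ i * t ^ N := by
  rcases eq_or_ne c 0 with rfl | hc
  · simp
  · rw [mul_pow, mul_assoc, mul_assoc, ← pow_add, h hc]

noncomputable def lineWeight (x b : ℂ) (n k : ℕ) : ℂ := k * x ^ (k - 1) + b * (n - k : ℕ) * x ^ k

lemma evalAt_mul_dirD_monomial_expXY {n k : ℕ} (hk : k ≤ n) (x b t a : ℂ) :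
    evalAt (x * t) t (dirD 1 b (monomial (expXY k (n - k)) a)) =
      t ^ (n - 1) * (lineWeight x b n k * a) := by
  simp only [dirD, LinearMap.add_apply, LinearMap.smul_apply, one_smul, Derivation.coeFn_coe,
    pderiv_zero_monomial_expXY, pderiv_one_monomial_expXY, map_add, map_smul,
    evalAt_monomial_expXY, smul_eq_mul, lineWeight]
  have h₀ := natCast_mul_mul_pow_mul_pow (c := k) (i := k - 1) (j := n - k) (N := n - 1)
    (by omega) x t
  have h₁ := natCast_mul_mul_pow_mul_pow (c := n - k) (i := k) (j := n - k - 1) (N := n - 1)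
    (by omega) x t
  linear_combination a * h₀ + a * b * h₁

lemma lineWeight_neg (x b : ℂ) (n k : ℕ) :
    lineWeight (-x) b n k = (-1) ^ (k + 1) * lineWeight x (-b) n k := by
  rcases k with _ | k
  · simp [lineWeight]
  · simp only [lineWeight, Nat.add_sub_cancel, neg_pow x, pow_succ]
    ring

lemma lineWeight_zero (x b : ℂ) (n : ℕ) : lineWeight x b n 0 = b * n := by
  simp [lineWeight]

lemma ne_zero_of_sq_eq_two_mul_add_one {m : ℕ} {η : ℂ} (hη : η ^ 2 = 2 * m + 1) : η ≠ 0 := by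
  rintro rfl
  have : ((2 * m + 1 : ℕ) : ℂ) = 0 := by push_cast; rw [← hη]; ring
  exact absurd (Nat.cast_eq_zero.1 this) (by omega)

lemma lineWeight_two_mul_add_one_eq_zero_iff {m n : ℕ} {η : ℂ} (hη : η ^ 2 = 2 * m + 1)
    (hn : 2 * m + 1 ≤ n) : lineWeight η (-η) n (2 * m + 1) = 0 ↔ n = 2 * m + 2 := by
  have h : lineWeight η (-η) n (2 * m + 1) = η ^ (2 * m) * (2 * m + 1) * (2 * m + 2 - n) := by
    rw [lineWeight, Nat.add_sub_cancel, Nat.cast_sub hn]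
    push_cast
    linear_combination (-(n - (2 * m + 1) : ℂ) * η ^ (2 * m)) * hη
  have h₁ : (2 * m + 1 : ℂ) ≠ 0 := by exact_mod_cast Nat.succ_ne_zero (2 * m)
  rw [h, mul_eq_zero, mul_eq_zero, sub_eq_zero]
  simp only [pow_eq_zero_iff', ne_zero_of_sq_eq_two_mul_add_one hη, h₁, false_and, false_or]
  exact_mod_cast eq_comm

section Homogeneous

variable {n : ℕ} {q : MvPolynomial (Fin 2) ℂ}

lemma evalAt_zero_dirD_pow (hq : q.IsHomogeneous n) (j : ℕ) (y : ℂ) :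
    evalAt 0 y ((dirD 1 0 ^ j) q) =
      if j ≤ n then coeffXY n j q * (j.factorial : ℂ) * y ^ (n - j) else 0 := by
  conv_lhs => rw [hq.eq_sum_monomial_coeffXY, map_sum, map_sum]
  have hterm : ∀ k ∈ range (n + 1), evalAt 0 y ((dirD 1 0 ^ j)
      (monomial (expXY k (n - k)) (coeffXY n k q))) =
        if j = k then coeffXY n j q * j.factorial * y ^ (n - j) else 0 := by
    intro k _
    rw [dirD_one_zero_pow_monomial_expXY, evalAt_monomial_expXY]
    rcases lt_trichotomy k j with hkj | rfl | hkj
    · simp [hkj.ne', Nat.descFactorial_eq_zero_iff_lt.2 hkj]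
    · simp [Nat.descFactorial_self]
    · simp [hkj.ne, zero_pow (Nat.sub_ne_zero_of_lt hkj)]
  simp only [sum_congr rfl hterm, sum_ite_eq, mem_range, Nat.lt_succ_iff]

lemma evalAt_mul_dirD (hq : q.IsHomogeneous n) (x b t : ℂ) :
    evalAt (x * t) t (dirD 1 b q) =
      t ^ (n - 1) * ∑ k ∈ range (n + 1), lineWeight x b n k * coeffXY n k q := by
  conv_lhs => rw [hq.eq_sum_monomial_coeffXY, map_sum, map_sum]
  rw [mul_sum]
  exact sum_congr rfl fun k hk =>
    evalAt_mul_dirD_monomial_expXY (Nat.lt_succ_iff.1 (mem_range.1 hk)) _ _ _ _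

lemma forall_evalAt_zero_dirD_pow_eq_zero_iff (hq : q.IsHomogeneous n) (j : ℕ) :
    (∀ y, evalAt 0 y ((dirD 1 0 ^ j) q) = 0) ↔ (j ≤ n → coeffXY n j q = 0) := by
  simp_rw [evalAt_zero_dirD_pow hq]
  refine ⟨fun h hj => ?_, fun h y => ?_⟩
  · simpa [hj, Nat.factorial_ne_zero] using h 1
  · split_ifs with hj
    · simp [h hj]
    · rfl

lemma forall_evalAt_mul_dirD_eq_zero_iff (hq : q.IsHomogeneous n) (x b : ℂ) :
    (∀ t, evalAt (x * t) t (dirD 1 b q) = 0) ↔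
      ∑ k ∈ range (n + 1), lineWeight x b n k * coeffXY n k q = 0 := by
  simp_rw [evalAt_mul_dirD hq]
  exact ⟨fun h => by simpa using h 1, fun h t => by rw [h, mul_zero]⟩

theorem mem_quasiA_iff_coeffXY (m : ℕ) (η : ℂ) (hq : q.IsHomogeneous n) :
    q ∈ quasiA m η ↔ (∀ k ≤ n, Odd k → k < 2 * m → coeffXY n k q = 0) ∧
      ∑ k ∈ range (n + 1) with Even k, lineWeight η (-η) n k * coeffXY n k q = 0 ∧
      ∑ k ∈ range (n + 1) with Odd k, lineWeight η (-η) n k * coeffXY n k q = 0 := by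
  have hx : (∀ r ∈ Icc 1 m, ∀ y, evalAt 0 y ((dirD 1 0 ^ (2 * r - 1)) q) = 0) ↔
      ∀ k ≤ n, Odd k → k < 2 * m → coeffXY n k q = 0 := by
    simp_rw [forall_evalAt_zero_dirD_pow_eq_zero_iff hq, mem_Icc]
    refine ⟨fun h k hk ⟨r, hr⟩ hkm => ?_, fun h r hr hrn => h _ hrn ⟨r - 1, by omega⟩ (by omega)⟩
    have hk' : 2 * (r + 1) - 1 = k := by omega
    exact hk' ▸ h (r + 1) (by omega) (by omega)
  have hminus : (∀ t, evalAt (-(η * t)) t (dirD 1 η q) = 0) ↔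
      ∑ k ∈ range (n + 1), (-1) ^ (k + 1) * (lineWeight η (-η) n k * coeffXY n k q) = 0 := by
    simp_rw [← neg_mul, forall_evalAt_mul_dirD_eq_zero_iff hq, lineWeight_neg, mul_assoc]
  have hplus := forall_evalAt_mul_dirD_eq_zero_iff hq η (-η)
  simp only [quasiA, Submodule.mem_inf, Submodule.mem_iInf, LinearMap.mem_ker,
    LinearMap.coe_comp, Function.comp_apply]
  rw [hx, hminus, hplus, and_assoc, sum_eq_zero_and_sum_neg_one_pow_mul_eq_zero_iff]

end Homogeneous

def pivots (m n : ℕ) : Finset ℕ :=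
  {k ∈ range (n + 1) | (Odd k ∧ k < 2 * m) ∨ (k = 0 ∧ n ≠ 0) ∨ (k = 2 * m + 1 ∧ n ≠ 2 * m + 2)}

lemma mem_pivots {m n p : ℕ} : p ∈ pivots m n ↔ p ≤ n ∧
    ((Odd p ∧ p < 2 * m) ∨ (p = 0 ∧ n ≠ 0) ∨ (p = 2 * m + 1 ∧ n ≠ 2 * m + 2)) := by
  simp [pivots]

/-- The odd line condition is only summed over `k > 2m`: the lower odd coefficients already vanish
on `quasiA`, and dropping them makes the constraints diagonal on the pivot monomials. -/
noncomputable def pivotConstraint (m n : ℕ) (η : ℂ) (p : ℕ) : MvPolynomial (Fin 2) ℂ →ₗ[ℂ] ℂ :=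
  if p = 0 then ∑ k ∈ range (n + 1) with Even k, lineWeight η (-η) n k • coeffXY n k
  else if p = 2 * m + 1 then
    ∑ k ∈ range (n + 1) with Odd k ∧ 2 * m < k, lineWeight η (-η) n k • coeffXY n k
  else coeffXY n p

lemma pivotConstraint_monomial (m : ℕ) (η : ℂ) {n k : ℕ} (hk : k ≤ n) (p : ℕ) :
    pivotConstraint m n η p (monomial (expXY k (n - k)) 1) =
      if p = 0 then (if Even k then lineWeight η (-η) n k else 0)
      else if p = 2 * m + 1 then (if Odd k ∧ 2 * m < k then lineWeight η (-η) n k else 0)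
      else if k = p then 1 else 0 := by
  have hk' : k ∈ range (n + 1) := mem_range.2 (Nat.lt_succ_of_le hk)
  unfold pivotConstraint
  split_ifs <;> simp [LinearMap.sum_apply, coeffXY_monomial, *]

section Pivots

variable {m n : ℕ} {η : ℂ}

lemma pivotConstraint_monomial_self (hη : η ^ 2 = 2 * m + 1) {p : ℕ} (hp : p ∈ pivots m n) :
    pivotConstraint m n η p (monomial (expXY p (n - p)) 1) ≠ 0 := by
  rw [mem_pivots] at hp
  rw [pivotConstraint_monomial m η hp.1]
  obtain ⟨hpn, ⟨hodd, hpm⟩ | ⟨rfl, hn⟩ | ⟨rfl, hn⟩⟩ := hp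
  · have : p ≠ 0 := by rintro rfl; exact Nat.not_odd_zero hodd
    rw [if_neg this, if_neg (by omega), if_pos rfl]
    exact one_ne_zero
  · simp [lineWeight_zero, ne_zero_of_sq_eq_two_mul_add_one hη, hn]
  · rw [if_neg (by omega), if_pos rfl, if_pos ⟨odd_two_mul_add_one m, by omega⟩]
    exact (lineWeight_two_mul_add_one_eq_zero_iff hη (by omega)).not.2 hn

lemma pivotConstraint_monomial_of_ne {p p' : ℕ} (hp : p ∈ pivots m n) (hp' : p' ∈ pivots m n)
    (h : p' ≠ p) : pivotConstraint m n η p (monomial (expXY p' (n - p')) 1) = 0 := by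
  simp only [mem_pivots, Nat.odd_iff] at hp hp'
  rw [pivotConstraint_monomial m η (by omega)]
  simp only [Nat.odd_iff, Nat.even_iff]
  split_ifs <;> first | rfl | (exfalso; omega)

lemma pivotConstraint_zero (q : MvPolynomial (Fin 2) ℂ) :
    pivotConstraint m n η 0 q =
      ∑ k ∈ range (n + 1) with Even k, lineWeight η (-η) n k * coeffXY n k q := by
  simp [pivotConstraint, LinearMap.sum_apply]

lemma pivotConstraint_zero_of_eq_zero (hn : n = 0) (q : MvPolynomial (Fin 2) ℂ) :
    pivotConstraint m n η 0 q = 0 := by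
  subst hn
  simp [pivotConstraint_zero, sum_filter, lineWeight_zero]

lemma pivotConstraint_two_mul_add_one (q : MvPolynomial (Fin 2) ℂ) :
    pivotConstraint m n η (2 * m + 1) q =
      ∑ k ∈ range (n + 1) with Odd k ∧ 2 * m < k, lineWeight η (-η) n k * coeffXY n k q := by
  simp [pivotConstraint, LinearMap.sum_apply]

lemma pivotConstraint_two_mul_add_one_eq_sum_odd {q : MvPolynomial (Fin 2) ℂ}
    (hq : ∀ k ≤ n, Odd k → k < 2 * m → coeffXY n k q = 0) :
    pivotConstraint m n η (2 * m + 1) q =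
      ∑ k ∈ range (n + 1) with Odd k, lineWeight η (-η) n k * coeffXY n k q := by
  rw [pivotConstraint_two_mul_add_one, eq_comm, ← sum_filter_add_sum_filter_not _ (2 * m < ·),
    filter_filter, filter_filter, add_eq_left]
  refine sum_eq_zero fun k hk => ?_
  simp only [mem_filter, mem_range, not_lt, Nat.odd_iff] at hk
  rw [hq k (by omega) (Nat.odd_iff.2 hk.2.1) (by omega), mul_zero]

lemma pivotConstraint_two_mul_add_one_eq_zero (hη : η ^ 2 = 2 * m + 1)
    (hn : ¬(2 * m + 1 ≤ n ∧ n ≠ 2 * m + 2)) (q : MvPolynomial (Fin 2) ℂ) :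
    pivotConstraint m n η (2 * m + 1) q = 0 := by
  rw [pivotConstraint_two_mul_add_one]
  refine sum_eq_zero fun k hk => ?_
  simp only [mem_filter, mem_range, Nat.odd_iff] at hk
  obtain rfl : k = 2 * m + 1 := by omega
  rw [(lineWeight_two_mul_add_one_eq_zero_iff hη (by omega)).2 (by omega), zero_mul]

lemma pivotConstraint_of_ne {p : ℕ} (h₀ : p ≠ 0) (h₁ : p ≠ 2 * m + 1)
    (q : MvPolynomial (Fin 2) ℂ) : pivotConstraint m n η p q = coeffXY n p q := by
  simp [pivotConstraint, h₀, h₁]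

theorem mem_quasiA_iff_pivotConstraint (hη : η ^ 2 = 2 * m + 1)
    {q : MvPolynomial (Fin 2) ℂ} (hq : q.IsHomogeneous n) :
    q ∈ quasiA m η ↔ ∀ p ∈ pivots m n, pivotConstraint m n η p q = 0 := by
  rw [mem_quasiA_iff_coeffXY m η hq]
  constructor
  · rintro ⟨hF, hE, hO⟩ p hp
    obtain ⟨hpn, ⟨hp, hpm⟩ | ⟨rfl, -⟩ | ⟨rfl, -⟩⟩ := mem_pivots.1 hp
    · rw [pivotConstraint_of_ne (by rintro rfl; exact Nat.not_odd_zero hp) (by omega)]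
      exact hF p hpn hp hpm
    · rwa [pivotConstraint_zero]
    · rwa [pivotConstraint_two_mul_add_one_eq_sum_odd hF]
  · intro h
    have hF : ∀ k ≤ n, Odd k → k < 2 * m → coeffXY n k q = 0 := fun k hkn hk hkm => by
      rw [← pivotConstraint_of_ne (m := m) (η := η) (by rintro rfl; exact Nat.not_odd_zero hk)
        (by omega)]
      exact h k (mem_pivots.2 ⟨hkn, Or.inl ⟨hk, hkm⟩⟩)
    refine ⟨hF, ?_, ?_⟩
    · rw [← pivotConstraint_zero (m := m)]
      rcases eq_or_ne n 0 with hn | hn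
      · exact pivotConstraint_zero_of_eq_zero hn q
      · exact h 0 (mem_pivots.2 ⟨n.zero_le, Or.inr (Or.inl ⟨rfl, hn⟩)⟩)
    · rw [← pivotConstraint_two_mul_add_one_eq_sum_odd hF]
      by_cases hn : 2 * m + 1 ≤ n ∧ n ≠ 2 * m + 2
      · exact h _ (mem_pivots.2 ⟨hn.1, Or.inr (Or.inr ⟨rfl, hn.2⟩)⟩)
      · exact pivotConstraint_two_mul_add_one_eq_zero hη hn q

end Pivots

def quasiAHilbert (m n : ℕ) : ℕ :=
  if n = 0 then 1 else if n ≤ 2 * m + 1 then n / 2 else if n = 2 * m + 2 then m + 2 else n - m - 1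

theorem quasiAHilbert_add_card_pivots (m n : ℕ) : quasiAHilbert m n + #(pivots m n) = n + 1 := by
  have hcount : ∀ N, Nat.count (fun k => (Odd k ∧ k < 2 * m) ∨ (k = 0 ∧ n ≠ 0) ∨
      (k = 2 * m + 1 ∧ n ≠ 2 * m + 2)) N = min m (N / 2) + (if 1 ≤ N ∧ n ≠ 0 then 1 else 0) +
      (if 2 * m + 2 ≤ N ∧ n ≠ 2 * m + 2 then 1 else 0) := by
    intro N
    induction N with
    | zero => simp
    | succ N ih =>
      rw [Nat.count_succ, ih]
      simp only [Nat.odd_iff]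
      split_ifs <;> omega
  rw [pivots, ← Nat.count_eq_card_filter_range, hcount, quasiAHilbert]
  split_ifs <;> omega

theorem finrank_homogeneousSubmodule_inf_quasiA {m : ℕ} {η : ℂ} (hη : η ^ 2 = 2 * m + 1)
    (n : ℕ) :
    finrank ℂ ↥(homogeneousSubmodule (Fin 2) ℂ n ⊓ quasiA m η) = quasiAHilbert m n := by
  set L : MvPolynomial (Fin 2) ℂ →ₗ[ℂ] pivots m n → ℂ :=
    LinearMap.pi fun p => pivotConstraint m n η p
  have hker : homogeneousSubmodule (Fin 2) ℂ n ⊓ quasiA m η =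
      homogeneousSubmodule (Fin 2) ℂ n ⊓ LinearMap.ker L := by
    ext q
    simp only [Submodule.mem_inf, mem_homogeneousSubmodule, LinearMap.mem_ker, and_congr_right_iff]
    intro hq
    rw [mem_quasiA_iff_pivotConstraint hη hq, funext_iff, Subtype.forall]
    rfl
  have h := (homogeneousSubmodule (Fin 2) ℂ n).finrank_inf_ker_add_card L
    (fun p => monomial (expXY p (n - p)) 1)
    (fun p => monomial_expXY_mem_homogeneousSubmodule (mem_pivots.1 p.2).1 1)
    (fun p => pivotConstraint_monomial_self hη p.2)
    (fun p p' hpp' => pivotConstraint_monomial_of_ne p'.2 p.2 (Subtype.val_injective.ne hpp'))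
  rw [finrank_homogeneousSubmodule_fin_two ℂ, Fintype.card_coe, ← hker] at h
  have := quasiAHilbert_add_card_pivots m n
  omega

lemma quasiAHilbert_cases (m n : ℕ) :
    (n = 0 ∧ quasiAHilbert m n = 1) ∨ (n ≠ 0 ∧ n ≤ 2 * m + 1 ∧ quasiAHilbert m n = n / 2) ∨
      (n = 2 * m + 2 ∧ quasiAHilbert m n = m + 2) ∨
      (2 * m + 3 ≤ n ∧ quasiAHilbert m n = n - m - 1) := by
  unfold quasiAHilbert
  split_ifs <;> omega

theorem quasiAHilbert_recurrence {m : ℕ} (hm : 1 ≤ m) (N : ℕ) :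
    quasiAHilbert m N + (if 5 ≤ N then quasiAHilbert m (N - 5) else 0) =
      (if 2 ≤ N then quasiAHilbert m (N - 2) else 0) +
        (if 3 ≤ N then quasiAHilbert m (N - 3) else 0) +
        ((if N = 0 then 1 else 0) + (if N = 4 then 1 else 0) + (if N = 5 then 1 else 0) +
          (if N = 2 * m + 2 then 1 else 0) + (if N = 2 * m + 3 then 1 else 0) +
          (if N = 2 * m + 7 then 1 else 0)) := by
  have h₀ := quasiAHilbert_cases m N
  have h₂ := quasiAHilbert_cases m (N - 2)
  have h₃ := quasiAHilbert_cases m (N - 3)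
  have h₅ := quasiAHilbert_cases m (N - 5)
  split_ifs <;> omega

/-- The Poincaré series of the ring of quasi-invariants of `A₂(m)` equals
`(1 + t⁴ + t⁵ + t^{2m+2} + t^{2m+3} + t^{2m+7}) / ((1-t²)(1-t³))`. -/
theorem quasiA_poincare_series (m : ℕ) (hm : 1 ≤ m) (η : ℂ) (hη : η ^ 2 = 2 * (m : ℂ) + 1) :
    (PowerSeries.mk fun n =>
        (Module.finrank ℂ
          ↥(MvPolynomial.homogeneousSubmodule (Fin 2) ℂ n ⊓ quasiA m η) : ℚ)) *
      (1 - PowerSeries.X ^ 2) * (1 - PowerSeries.X ^ 3) =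
    1 + PowerSeries.X ^ 4 + PowerSeries.X ^ 5 + PowerSeries.X ^ (2 * m + 2) +
      PowerSeries.X ^ (2 * m + 3) + PowerSeries.X ^ (2 * m + 7) := by
  simp_rw [finrank_homogeneousSubmodule_inf_quasiA hη]
  set H := PowerSeries.mk fun n => (quasiAHilbert m n : ℚ)
  have hexpand : H * (1 - PowerSeries.X ^ 2) * (1 - PowerSeries.X ^ 3) =
      H + H * PowerSeries.X ^ 5 - H * PowerSeries.X ^ 2 - H * PowerSeries.X ^ 3 := by ring
  rw [hexpand]
  ext N
  have h := congrArg (Nat.cast : ℕ → ℚ) (quasiAHilbert_recurrence hm N)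
  simp only [map_add, map_sub, PowerSeries.coeff_mk, PowerSeries.coeff_mul_X_pow',
    PowerSeries.coeff_one, PowerSeries.coeff_X_pow, H]
  push_cast at h
  linear_combination h
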